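/- Moment bound for the L¹ norm of the standard deviation of the Gaussian-smoothed empirical process: Let μ be a Borel probability measure on ℝ^d, σ > 0, and X ∼ μ. Then ∫_{ℝ^d} √(Var_μ(φ_σ(x−·))) dx ≤ 8^{d/2} + (2^{d/2+1}/(σ^d·Γ(d/2)))·∫_0^∞ t^{d−1}·√(ℙ(‖X‖ > t)) dt, where Γ is the Gamma function. Consequently, if E[‖X‖^{2d+ε}] < ∞ for some ε > 0, then ∫_{ℝ^d} √(Var_μ(φ_σ(x−·))) dx < ∞. -/

import Mathlib

open MeasureTheory Filter Topology
open scoped ENNReal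

noncomputable section

/-- The density of the centered isotropic Gaussian `N(0, σ² I_d)` on `ℝ^d`. -/
def gaussDensity (d : ℕ) (σ : ℝ) (x : EuclideanSpace ℝ (Fin d)) : ℝ :=
  (2 * Real.pi * σ ^ 2) ^ (-(d : ℝ) / 2) * Real.exp (-‖x‖ ^ 2 / (2 * σ ^ 2))

/-- The Lebesgue density of `μ * γ_σ`: `(μ*φ_σ)(x) = ∫ φ_σ(x−y) dμ(y)`. -/
def smoothDensity (d : ℕ) (σ : ℝ) (μ : Measure (EuclideanSpace ℝ (Fin d)))
    (x : EuclideanSpace ℝ (Fin d)) : ℝ :=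
  ∫ y, gaussDensity d σ (x - y) ∂μ

/-- `Var_μ(φ_σ(x−·))`, the variance of `φ_σ(x−X)` for `X ∼ μ`. -/
def smoothVar (d : ℕ) (σ : ℝ) (μ : Measure (EuclideanSpace ℝ (Fin d)))
    (x : EuclideanSpace ℝ (Fin d)) : ℝ :=
  ∫ y, (gaussDensity d σ (x - y) - smoothDensity d σ μ x) ^ 2 ∂μ

/-!
For each `x`, the variance is at most the second moment `E[φ_σ(x - X)²]`. When `‖X‖ ≤ ‖x‖/2`
we have `‖x - X‖ ≥ ‖x‖/2`, so this part is at most `φ_σ(0)² e^{-‖x‖²/(4σ²)}`; the rest is at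
most `φ_σ(0)² ℙ(‖X‖ > ‖x‖/2)`. Taking square roots, `√Var` is dominated by a Gaussian in `x` of
total mass `4^{d/2}` plus `φ_σ(0) √ℙ(‖X‖ > ‖x‖/2)`, a radial function whose integral is computed
in polar coordinates after the substitution `r = 2t`. Under a moment of order `p > 2d`,
Markov's inequality gives `√ℙ(‖X‖ > t) = O(t^{-p/2})`, which makes the radial integral finite.
-/

open Set Real

def gaussNormConst (d : ℕ) (σ : ℝ) : ℝ :=
  (2 * π * σ ^ 2) ^ (-(d : ℝ) / 2)

section Gaussian

variable {d : ℕ} {σ : ℝ}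

lemma gaussDensity_eq (x : EuclideanSpace ℝ (Fin d)) :
    gaussDensity d σ x = gaussNormConst d σ * exp (-‖x‖ ^ 2 / (2 * σ ^ 2)) := rfl

lemma gaussNormConst_pos (hσ : 0 < σ) : 0 < gaussNormConst d σ := by
  unfold gaussNormConst; positivity

@[fun_prop]
lemma continuous_gaussDensity : Continuous (gaussDensity d σ) := by
  unfold gaussDensity; fun_prop

lemma gaussDensity_nonneg (x : EuclideanSpace ℝ (Fin d)) : 0 ≤ gaussDensity d σ x := by
  unfold gaussDensity; positivity

lemma gaussDensity_le (x : EuclideanSpace ℝ (Fin d)) :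
    gaussDensity d σ x ≤ gaussNormConst d σ := by
  rw [gaussDensity_eq]
  refine mul_le_of_le_one_right (by unfold gaussNormConst; positivity) (exp_le_one_iff.2 ?_)
  exact div_nonpos_of_nonpos_of_nonneg (by simp) (by positivity)

lemma gaussDensity_sq (x : EuclideanSpace ℝ (Fin d)) :
    gaussDensity d σ x ^ 2 = gaussNormConst d σ ^ 2 * exp (-‖x‖ ^ 2 / σ ^ 2) := by
  rw [gaussDensity_eq, mul_pow, ← exp_nat_mul]
  ring_nf

lemma gaussDensity_sub_sq_le_of_norm_le {x y : EuclideanSpace ℝ (Fin d)} (hσ : 0 < σ)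
    (hy : ‖y‖ ≤ ‖x‖ / 2) :
    gaussDensity d σ (x - y) ^ 2 ≤
      gaussNormConst d σ ^ 2 * exp (-‖x‖ ^ 2 / (4 * σ ^ 2)) := by
  have hxy : ‖x‖ / 2 ≤ ‖x - y‖ := by linarith [norm_sub_norm_le x y]
  rw [gaussDensity_sq]
  refine mul_le_mul_of_nonneg_left (exp_le_exp.2 ?_) (sq_nonneg _)
  have hsq : ‖x‖ ^ 2 ≤ 4 * ‖x - y‖ ^ 2 := by nlinarith [norm_nonneg x]
  rw [div_le_div_iff₀ (by positivity) (by positivity)]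
  nlinarith [sq_nonneg σ]

lemma gaussDensity_sub_sq_le (hσ : 0 < σ) (x y : EuclideanSpace ℝ (Fin d)) :
    gaussDensity d σ (x - y) ^ 2 ≤ gaussNormConst d σ ^ 2 * exp (-‖x‖ ^ 2 / (4 * σ ^ 2)) +
      {y | ‖x‖ / 2 < ‖y‖}.indicator (fun _ ↦ gaussNormConst d σ ^ 2) y := by
  by_cases hy : ‖x‖ / 2 < ‖y‖
  · rw [indicator_of_mem (show y ∈ {y | ‖x‖ / 2 < ‖y‖} from hy)]
    have := pow_le_pow_left₀ (gaussDensity_nonneg _) (gaussDensity_le (σ := σ) (x - y)) 2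
    nlinarith [exp_pos (-‖x‖ ^ 2 / (4 * σ ^ 2)), sq_nonneg (gaussNormConst d σ)]
  · rw [indicator_of_notMem (show y ∉ {y | ‖x‖ / 2 < ‖y‖} from hy), add_zero]
    exact gaussDensity_sub_sq_le_of_norm_le hσ (not_lt.1 hy)

end Gaussian

section SmoothVar

variable {d : ℕ} {σ : ℝ} (μ : Measure (EuclideanSpace ℝ (Fin d)))

open ProbabilityTheory in
lemma smoothVar_eq_variance (x : EuclideanSpace ℝ (Fin d)) :
    smoothVar d σ μ x = variance (fun y ↦ gaussDensity d σ (x - y)) μ :=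
  (variance_eq_integral (by fun_prop)).symm

lemma smoothVar_le [IsProbabilityMeasure μ] (hσ : 0 < σ) (x : EuclideanSpace ℝ (Fin d)) :
    smoothVar d σ μ x ≤ gaussNormConst d σ ^ 2 * exp (-‖x‖ ^ 2 / (4 * σ ^ 2)) +
      gaussNormConst d σ ^ 2 * μ.real {y | ‖x‖ / 2 < ‖y‖} := by
  have hS : MeasurableSet {y : EuclideanSpace ℝ (Fin d) | ‖x‖ / 2 < ‖y‖} :=
    measurableSet_lt measurable_const measurable_norm
  rw [smoothVar_eq_variance]
  refine (ProbabilityTheory.variance_le_expectation_sq (by fun_prop)).trans ?_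
  calc ∫ y, gaussDensity d σ (x - y) ^ 2 ∂μ
      ≤ ∫ y, (gaussNormConst d σ ^ 2 * exp (-‖x‖ ^ 2 / (4 * σ ^ 2)) +
          {y | ‖x‖ / 2 < ‖y‖}.indicator (fun _ ↦ gaussNormConst d σ ^ 2) y) ∂μ :=
        integral_mono_of_nonneg (.of_forall fun y ↦ sq_nonneg _)
          ((integrable_const _).add ((integrable_const _).indicator hS))
          (.of_forall (gaussDensity_sub_sq_le hσ x))
    _ = _ := by
        rw [integral_add (integrable_const _) ((integrable_const _).indicator hS),
          integral_const, integral_indicator_const _ hS]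
        simp [mul_comm]

lemma sqrt_smoothVar_le [IsProbabilityMeasure μ] (hσ : 0 < σ) (x : EuclideanSpace ℝ (Fin d)) :
    √(smoothVar d σ μ x) ≤ gaussNormConst d σ * exp (-‖x‖ ^ 2 / (8 * σ ^ 2)) +
      gaussNormConst d σ * √(μ.real {y | ‖x‖ / 2 < ‖y‖}) := by
  have hb := gaussNormConst_pos (d := d) hσ
  have hexp : exp (-‖x‖ ^ 2 / (4 * σ ^ 2)) = exp (-‖x‖ ^ 2 / (8 * σ ^ 2)) ^ 2 := by
    rw [← exp_nat_mul]; ring_nf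
  have htail := sq_sqrt (measureReal_nonneg (μ := μ) (s := {y | ‖x‖ / 2 < ‖y‖}))
  set b := gaussNormConst d σ
  set e := exp (-‖x‖ ^ 2 / (8 * σ ^ 2))
  set s := √(μ.real {y | ‖x‖ / 2 < ‖y‖})
  have hsq : b ^ 2 * exp (-‖x‖ ^ 2 / (4 * σ ^ 2)) +
      b ^ 2 * μ.real {y | ‖x‖ / 2 < ‖y‖} = (b * e) ^ 2 + (b * s) ^ 2 := by
    rw [hexp, mul_pow, mul_pow, htail]
  have hcross : 0 ≤ (b * e) * (b * s) := by positivity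
  refine sqrt_le_iff.2 ⟨by positivity, (smoothVar_le μ hσ x).trans (hsq.trans_le ?_)⟩
  nlinarith

end SmoothVar

lemma lintegral_gaussNormConst_mul_exp {d : ℕ} {σ : ℝ} (hσ : 0 < σ) :
    ∫⁻ x : EuclideanSpace ℝ (Fin d),
        ENNReal.ofReal (gaussNormConst d σ * exp (-‖x‖ ^ 2 / (8 * σ ^ 2))) =
      ENNReal.ofReal (4 ^ ((d : ℝ) / 2)) := by
  have hexp : ∀ x : EuclideanSpace ℝ (Fin d),
      exp (-‖x‖ ^ 2 / (8 * σ ^ 2)) = exp (-(8 * σ ^ 2)⁻¹ * ‖x‖ ^ 2) := fun _ ↦ by ring_nf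
  have hb := gaussNormConst_pos (d := d) hσ
  have hI := GaussianFourier.integral_rexp_neg_mul_sq_norm (V := EuclideanSpace ℝ (Fin d))
    (b := (8 * σ ^ 2)⁻¹) (by positivity)
  have hint :
      Integrable fun x : EuclideanSpace ℝ (Fin d) ↦ exp (-(8 * σ ^ 2)⁻¹ * ‖x‖ ^ 2) :=
    .of_integral_ne_zero (by rw [hI]; positivity)
  simp_rw [hexp]
  rw [← ofReal_integral_eq_lintegral_ofReal (hint.const_mul _)
      (.of_forall fun _ ↦ by positivity),
    integral_const_mul, hI, finrank_euclideanSpace_fin, gaussNormConst, neg_div,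
    rpow_neg (by positivity), inv_mul_eq_div, ← div_rpow (by positivity) (by positivity)]
  congr 2
  field_simp
  ring

theorem lintegral_fun_norm_addHaar {V : Type*} [NormedAddCommGroup V] [NormedSpace ℝ V]
    [MeasurableSpace V] [BorelSpace V] [Nontrivial V] [FiniteDimensional ℝ V]
    (μ : Measure V) [μ.IsAddHaarMeasure] {f : ℝ → ℝ≥0∞} (hf : Measurable f) :
    ∫⁻ x, f ‖x‖ ∂μ = μ.toSphere univ *
      ∫⁻ r in Ioi (0 : ℝ), ENNReal.ofReal (r ^ (Module.finrank ℝ V - 1)) * f r := by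
  have hf' : Measurable fun p : Metric.sphere (0 : V) 1 × Ioi (0 : ℝ) ↦ f p.2 := by fun_prop
  calc ∫⁻ x, f ‖x‖ ∂μ = ∫⁻ x : ({0}ᶜ : Set V), f ‖x.1‖ ∂μ.comap (↑) := by
        rw [lintegral_subtype_comap (measurableSet_singleton _).compl fun x ↦ f ‖x‖,
          restrict_compl_singleton]
    _ = ∫⁻ p, f p.2 ∂μ.toSphere.prod (.volumeIoiPow (Module.finrank ℝ V - 1)) := by
        rw [← μ.measurePreserving_homeomorphUnitSphereProd.lintegral_comp hf']
        simp [homeomorphUnitSphereProd, homeomorphSphereProd]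
    _ = μ.toSphere univ * ∫⁻ r, f r ∂.volumeIoiPow (Module.finrank ℝ V - 1) := by
        simp only [lintegral_prod _ hf'.aemeasurable, lintegral_const, mul_comm]
    _ = _ := by
        rw [Measure.volumeIoiPow, lintegral_withDensity_eq_lintegral_mul _ (by fun_prop)
          (by fun_prop), Pi.mul_def, lintegral_subtype_comap measurableSet_Ioi
            fun r ↦ ENNReal.ofReal (r ^ (Module.finrank ℝ V - 1)) * f r]

lemma toSphere_univ_euclideanSpace {d : ℕ} (hd : 0 < d) :
    (volume : Measure (EuclideanSpace ℝ (Fin d))).toSphere univ =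
      ENNReal.ofReal (2 * π ^ ((d : ℝ) / 2) / Gamma ((d : ℝ) / 2)) := by
  have : Nonempty (Fin d) := ⟨⟨0, hd⟩⟩
  rw [Measure.toSphere_apply_univ, EuclideanSpace.volume_ball, finrank_euclideanSpace_fin,
    Fintype.card_fin, ENNReal.ofReal_one, one_pow, one_mul, ← ENNReal.ofReal_natCast d,
    ← ENNReal.ofReal_mul (by positivity), Gamma_add_one (by positivity),
    sqrt_eq_rpow, ← rpow_natCast, ← rpow_mul pi_pos.le]
  have : Gamma ((d : ℝ) / 2) ≠ 0 := (Gamma_pos_of_pos (by positivity)).ne'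
  congr 1
  field_simp

lemma lintegral_Ioi_eq_ofReal_mul_lintegral_comp_mul {a : ℝ} (ha : 0 < a)
    (f : ℝ → ℝ≥0∞) :
    ∫⁻ r in Ioi (0 : ℝ), f r = ENNReal.ofReal a * ∫⁻ t in Ioi (0 : ℝ), f (a * t) := by
  have := lintegral_image_eq_lintegral_abs_deriv_mul (measurableSet_Ioi (a := 0))
    (fun t _ ↦ ((hasDerivAt_id t).const_mul a).hasDerivWithinAt)
    (mul_right_injective₀ ha.ne').injOn f
  simp only [id, mul_one, abs_of_pos ha, image_const_mul_Ioi_zero ha] at this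
  rw [this, lintegral_const_mul' _ _ ENNReal.ofReal_ne_top]

lemma lintegral_euclideanSpace_fun_norm {d : ℕ} (hd : 0 < d) {f : ℝ → ℝ≥0∞}
    (hf : Measurable f) :
    ∫⁻ x : EuclideanSpace ℝ (Fin d), f ‖x‖ =
      ENNReal.ofReal (2 * π ^ ((d : ℝ) / 2) / Gamma ((d : ℝ) / 2)) *
        ∫⁻ r in Ioi (0 : ℝ), ENNReal.ofReal (r ^ (d - 1)) * f r := by
  have : Nontrivial (EuclideanSpace ℝ (Fin d)) :=
    Module.nontrivial_of_finrank_pos (R := ℝ) (by rwa [finrank_euclideanSpace_fin])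
  rw [lintegral_fun_norm_addHaar volume hf, toSphere_univ_euclideanSpace hd,
    finrank_euclideanSpace_fin]

lemma two_pow_mul_gaussNormConst {d : ℕ} {σ : ℝ} (hσ : 0 < σ) :
    2 ^ d * gaussNormConst d σ = 2 ^ ((d : ℝ) / 2) / (π ^ ((d : ℝ) / 2) * σ ^ d) := by
  have h2 : (2 : ℝ) ^ d = 2 ^ ((d : ℝ) / 2) * 2 ^ ((d : ℝ) / 2) := by
    rw [← rpow_add two_pos, add_halves, rpow_natCast]
  have hσd : (σ ^ 2) ^ ((d : ℝ) / 2) = σ ^ d := by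
    rw [← rpow_natCast σ 2, ← rpow_mul hσ.le, ← rpow_natCast σ d]
    ring_nf
  rw [gaussNormConst, neg_div, rpow_neg (by positivity), mul_rpow (by positivity) (by positivity),
    mul_rpow (by positivity) (by positivity), hσd, h2]
  have : 0 < (2 : ℝ) ^ ((d : ℝ) / 2) := by positivity
  field_simp

lemma lintegral_gaussNormConst_mul_comp_half_norm {d : ℕ} (hd : 0 < d) {σ : ℝ} (hσ : 0 < σ)
    {g : ℝ → ℝ} (hg : Measurable g) :
    ∫⁻ x : EuclideanSpace ℝ (Fin d), ENNReal.ofReal (gaussNormConst d σ * g (‖x‖ / 2)) =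
      ENNReal.ofReal (2 ^ ((d : ℝ) / 2 + 1) / (σ ^ d * Gamma ((d : ℝ) / 2))) *
        ∫⁻ t in Ioi (0 : ℝ), ENNReal.ofReal (t ^ (d - 1) * g t) := by
  have hb := gaussNormConst_pos (d := d) hσ
  have hrescale : ∀ t ∈ Ioi (0 : ℝ),
      ENNReal.ofReal ((2 * t) ^ (d - 1)) * ENNReal.ofReal (gaussNormConst d σ * g (2 * t / 2)) =
        ENNReal.ofReal (2 ^ (d - 1) * gaussNormConst d σ) *
          ENNReal.ofReal (t ^ (d - 1) * g t) := by
    intro t (ht : 0 < t)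
    rw [← ENNReal.ofReal_mul (by positivity), ← ENNReal.ofReal_mul (by positivity),
      mul_div_cancel_left₀ t two_ne_zero, mul_pow]
    ring_nf
  rw [lintegral_euclideanSpace_fun_norm hd
      (f := fun r ↦ ENNReal.ofReal (gaussNormConst d σ * g (r / 2))) (by fun_prop),
    lintegral_Ioi_eq_ofReal_mul_lintegral_comp_mul two_pos,
    setLIntegral_congr_fun measurableSet_Ioi hrescale,
    lintegral_const_mul' _ _ ENNReal.ofReal_ne_top, ← mul_assoc, ← mul_assoc,
    ← ENNReal.ofReal_mul (by positivity), ← ENNReal.ofReal_mul (by positivity)]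
  congr 2
  have hΓ : 0 < Gamma ((d : ℝ) / 2) := Gamma_pos_of_pos (by positivity)
  have h2d : (2 : ℝ) * 2 ^ (d - 1) = 2 ^ d := by rw [← pow_succ', Nat.sub_add_cancel hd]
  rw [mul_assoc _ 2, ← mul_assoc 2, h2d, two_pow_mul_gaussNormConst hσ, rpow_add_one two_ne_zero]
  field_simp

section TailProbability

variable {F : Type*} [NormedAddCommGroup F] [MeasurableSpace F] (μ : Measure F)

lemma measurable_sqrt_measureReal_norm_gt :
    Measurable fun t : ℝ ↦ √(μ.real {y | t < ‖y‖}) := by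
  have hanti : Antitone fun t : ℝ ↦ μ {y | t < ‖y‖} :=
    fun _ _ hst ↦ measure_mono fun _ hy ↦ hst.trans_lt hy
  exact continuous_sqrt.measurable.comp (ENNReal.measurable_toReal.comp hanti.measurable)

lemma rpow_mul_measureReal_norm_gt_le [IsFiniteMeasure μ] {t p : ℝ} (ht : 0 ≤ t) (hp : 0 ≤ p)
    (hint : Integrable (fun y ↦ ‖y‖ ^ p) μ) :
    t ^ p * μ.real {y | t < ‖y‖} ≤ ∫ y, ‖y‖ ^ p ∂μ := by
  refine le_trans ?_
    (mul_meas_ge_le_integral_of_nonneg (.of_forall fun y ↦ by positivity) hint (t ^ p))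
  gcongr ?_ * ?_
  exact measureReal_mono fun y (hy : t < ‖y‖) ↦ rpow_le_rpow ht hy.le hp

lemma lintegral_Ioi_pow_mul_sqrt_measureReal_norm_gt_lt_top [IsProbabilityMeasure μ] {n : ℕ}
    (hn : 0 < n) {p : ℝ} (hp : 2 * n < p) (hint : Integrable (fun y ↦ ‖y‖ ^ p) μ) :
    ∫⁻ t in Ioi (0 : ℝ), ENNReal.ofReal (t ^ (n - 1) * √(μ.real {y | t < ‖y‖})) < ∞ := by
  set K := ∫ y, ‖y‖ ^ p ∂μ
  set q := ((n : ℝ) - 1) - p / 2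
  have hp0 : 0 ≤ p := le_trans (by positivity) hp.le
  have hK : 0 ≤ K := integral_nonneg fun y ↦ by positivity
  have hnear : ∀ t ∈ Ioc (0 : ℝ) 1,
      ENNReal.ofReal (t ^ (n - 1) * √(μ.real {y | t < ‖y‖})) ≤ 1 := fun t ht ↦
    ENNReal.ofReal_le_one.2 <| mul_le_one₀ (pow_le_one₀ ht.1.le ht.2) (sqrt_nonneg _)
      (sqrt_le_one.2 measureReal_le_one)
  have hfar : ∀ t ∈ Ioi (1 : ℝ),
      ENNReal.ofReal (t ^ (n - 1) * √(μ.real {y | t < ‖y‖})) ≤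
        ENNReal.ofReal (√K * t ^ q) := by
    intro t (ht : 1 < t)
    have ht0 : 0 < t := one_pos.trans ht
    have htail : μ.real {y | t < ‖y‖} ≤ K * t ^ (-p) := by
      rw [rpow_neg ht0.le, ← div_eq_mul_inv, le_div_iff₀' (by positivity)]
      exact rpow_mul_measureReal_norm_gt_le μ ht0.le hp0 hint
    have hsplit : √K * t ^ q = t ^ (n - 1) * (√K * t ^ (-p / 2)) := by
      rw [show q = ((n : ℝ) - 1) + -p / 2 by ring, rpow_add ht0, ← rpow_natCast,
        Nat.cast_pred hn]
      ring
    rw [hsplit]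
    refine ENNReal.ofReal_le_ofReal (mul_le_mul_of_nonneg_left ?_ (by positivity))
    calc √(μ.real {y | t < ‖y‖}) ≤ √(K * t ^ (-p)) := sqrt_le_sqrt htail
      _ = √K * t ^ (-p / 2) := by
        rw [sqrt_mul hK, sqrt_eq_rpow (t ^ (-p)), ← rpow_mul ht0.le]
        ring_nf
  have hq : q < -1 := by simp only [q]; linarith
  rw [← Ioc_union_Ioi_eq_Ioi zero_le_one, lintegral_union measurableSet_Ioi Ioc_disjoint_Ioi_same]
  refine ENNReal.add_lt_top.2 ⟨?_, ?_⟩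
  · refine (setLIntegral_mono' measurableSet_Ioc hnear).trans_lt ?_
    simp
  · refine (setLIntegral_mono' measurableSet_Ioi hfar).trans_lt ?_
    exact ((integrableOn_Ioi_rpow_of_lt hq one_pos).const_mul _).lintegral_lt_top

end TailProbability

/-- Moment bound for the `L¹` norm of the standard deviation of the Gaussian-smoothed
empirical process: `∫ √Var_μ(φ_σ(x−·)) dx ≤ 8^{d/2} + (2^{d/2+1}/(σ^d Γ(d/2))) ∫₀^∞ t^{d−1}
√ℙ(‖X‖>t) dt`; in particular the left side is finite when `μ` has a finite `(2d+ε)`-th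
moment. -/
theorem smoothed_tv_moment_bound
    (d : ℕ) (hd : 0 < d) (σ : ℝ) (hσ : 0 < σ)
    (μ : Measure (EuclideanSpace ℝ (Fin d))) [IsProbabilityMeasure μ] :
    (∫⁻ x, ENNReal.ofReal (Real.sqrt (smoothVar d σ μ x)) ≤
      ENNReal.ofReal ((8 : ℝ) ^ ((d : ℝ) / 2)) +
      ENNReal.ofReal ((2 : ℝ) ^ ((d : ℝ) / 2 + 1) / (σ ^ d * Real.Gamma ((d : ℝ) / 2))) *
        ∫⁻ t in Set.Ioi (0 : ℝ),
          ENNReal.ofReal (t ^ (d - 1) * Real.sqrt ((μ {y | t < ‖y‖}).toReal)))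
    ∧
    ((∃ ε : ℝ, 0 < ε ∧ Integrable (fun y => ‖y‖ ^ ((2 * d : ℝ) + ε)) μ) →
      ∫⁻ x, ENNReal.ofReal (Real.sqrt (smoothVar d σ μ x)) < ⊤) := by
  simp only [← measureReal_def]
  set c := (2 : ℝ) ^ ((d : ℝ) / 2 + 1) / (σ ^ d * Gamma ((d : ℝ) / 2))
  set I := ∫⁻ t in Ioi (0 : ℝ), ENNReal.ofReal (t ^ (d - 1) * √(μ.real {y | t < ‖y‖}))
  refine (fun hbound ↦ ⟨hbound, fun ⟨ε, hε, hint⟩ ↦ hbound.trans_lt ?finite⟩) ?bound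
  case bound =>
    have hb := gaussNormConst_pos (d := d) hσ
    calc ∫⁻ x, ENNReal.ofReal √(smoothVar d σ μ x)
        ≤ ∫⁻ x, (ENNReal.ofReal (gaussNormConst d σ * exp (-‖x‖ ^ 2 / (8 * σ ^ 2))) +
            ENNReal.ofReal (gaussNormConst d σ * √(μ.real {y | ‖x‖ / 2 < ‖y‖}))) :=
          lintegral_mono fun x ↦ by
            rw [← ENNReal.ofReal_add (by positivity) (by positivity)]
            exact ENNReal.ofReal_le_ofReal (sqrt_smoothVar_le μ hσ x)
      _ = ENNReal.ofReal (4 ^ ((d : ℝ) / 2)) + ENNReal.ofReal c * I := by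
          rw [lintegral_add_left (by fun_prop), lintegral_gaussNormConst_mul_exp hσ,
            lintegral_gaussNormConst_mul_comp_half_norm hd hσ
              (measurable_sqrt_measureReal_norm_gt μ)]
      _ ≤ ENNReal.ofReal (8 ^ ((d : ℝ) / 2)) + ENNReal.ofReal c * I := by gcongr; norm_num
  case finite =>
    have hI : I < ∞ := lintegral_Ioi_pow_mul_sqrt_measureReal_norm_gt_lt_top μ hd
      (by linarith : 2 * (d : ℝ) < 2 * d + ε) hint
    exact ENNReal.add_lt_top.2
      ⟨ENNReal.ofReal_lt_top, ENNReal.mul_lt_top ENNReal.ofReal_lt_top hI⟩
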